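/- arXiv:1511.09120 — 2 statements merged into one kernel-verified Lean document; each statement's English description precedes it below -/
import Mathlib

section
/- For any rotation matrix R ∈ SO(d) and any matrix N ∈ ℝ^{d×d} with singular value decomposition N = UDV^T, the inequality trace(R N) ≤ trace(D) holds. -/
open Matrix in
/-- `R` is a rotation matrix: orthogonal with determinant 1. -/
def IsRotation {d : ℕ} (R : Matrix (Fin d) (Fin d) ℝ) : Prop :=
  Rᵀ * R = 1 ∧ R.det = 1

open Matrix in
/-- For any rotation matrix `R` and any matrix `N` with SVD `N = U D Vᵀ`,
`trace (R N) ≤ trace D`. -/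
theorem trace_rotation_le_trace_singular (d : ℕ)
    (N U V : Matrix (Fin d) (Fin d) ℝ) (σ : Fin d → ℝ)
    (hU : Uᵀ * U = 1) (hV : Vᵀ * V = 1)
    (hσ0 : ∀ i, 0 ≤ σ i) (hσmono : ∀ i j : Fin d, i ≤ j → σ j ≤ σ i)
    (hSVD : N = U * Matrix.diagonal σ * Vᵀ)
    (R : Matrix (Fin d) (Fin d) ℝ) (hR : IsRotation R) :
    (R * N).trace ≤ (Matrix.diagonal σ).trace := by
  obtain ⟨hRo, _⟩ := hR
  set M := Vᵀ * R * U with hM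
  have hVVT : V * Vᵀ = 1 := mul_eq_one_comm.mp hV
  have hRRT : R * Rᵀ = 1 := mul_eq_one_comm.mp hRo
  have hMo : Mᵀ * M = 1 := by
    have : Mᵀ * M = Uᵀ * (Rᵀ * ((V * Vᵀ) * (R * U))) := by
      simp [hM, Matrix.transpose_mul, Matrix.mul_assoc]
    rw [this, hVVT, Matrix.one_mul, ← Matrix.mul_assoc, ← Matrix.mul_assoc,
      Matrix.mul_assoc Uᵀ Rᵀ R, hRo, Matrix.mul_one, hU]
  have hdiag : ∀ i, M i i ≤ 1 := by
    intro i
    have h1 : (Mᵀ * M) i i = 1 := by rw [hMo]; simp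
    have h2 : ∑ j, (M j i)^2 = 1 := by
      simpa [Matrix.mul_apply, Matrix.transpose_apply, sq] using h1
    nlinarith [Finset.single_le_sum (f := fun j => (M j i)^2)
      (fun j _ => sq_nonneg (M j i)) (Finset.mem_univ i), sq_nonneg (M i i - 1)]
  have htr : (R * N).trace = (M * Matrix.diagonal σ).trace := by
    rw [hSVD, ← Matrix.mul_assoc, ← Matrix.mul_assoc, Matrix.trace_mul_comm, hM,
      ← Matrix.mul_assoc, ← Matrix.mul_assoc]
  rw [htr, Matrix.trace, Matrix.trace]
  apply Finset.sum_le_sum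
  intro i _
  have : (M * Matrix.diagonal σ).diag i = M i i * σ i := by
    simp [Matrix.diag, Matrix.mul_apply, Matrix.diagonal]
  rw [this]
  simpa using mul_le_mul_of_nonneg_right (hdiag i) (hσ0 i)
end

section
/- The matrix V D_r U^T is independent of the choice of singular value decomposition: if UDV^T and FEG^T are two SVDs of the same matrix N ∈ ℝ^{d×d} of rank r (singular values non-increasing), then V D_r U^T = G D_r F^T, where D_r is diagonal with ones in the first r diagonal entries and zeros elsewhere. -/
open Matrix in
/-- The matrix `V D_r Uᵀ` is independent of the chosen SVD: if `U D Vᵀ` and `F E Gᵀ` are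
two SVDs of the same rank-`r` matrix `N` (singular values non-increasing), then
`V D_r Uᵀ = G D_r Fᵀ`, where `D_r` is diagonal with ones in the first `r` entries. -/
theorem VDrUT_unique (d r : ℕ)
    (N U V F G : Matrix (Fin d) (Fin d) ℝ) (σ τ : Fin d → ℝ)
    (hU : Uᵀ * U = 1) (hV : Vᵀ * V = 1) (hF : Fᵀ * F = 1) (hG : Gᵀ * G = 1)
    (hσ0 : ∀ i, 0 ≤ σ i) (hσmono : ∀ i j : Fin d, i ≤ j → σ j ≤ σ i)
    (hτ0 : ∀ i, 0 ≤ τ i) (hτmono : ∀ i j : Fin d, i ≤ j → τ j ≤ τ i)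
    (hσrank : ∀ i : Fin d, σ i ≠ 0 ↔ (i : ℕ) < r)
    (hτrank : ∀ i : Fin d, τ i ≠ 0 ↔ (i : ℕ) < r)
    (hSVD1 : N = U * Matrix.diagonal σ * Vᵀ)
    (hSVD2 : N = F * Matrix.diagonal τ * Gᵀ) :
    V * Matrix.diagonal (fun i : Fin d => if (i : ℕ) < r then (1 : ℝ) else 0) * Uᵀ =
      G * Matrix.diagonal (fun i : Fin d => if (i : ℕ) < r then (1 : ℝ) else 0) * Fᵀ := by
  have hVV : V * Vᵀ = 1 := mul_eq_one_comm.mp hV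
  have hFF : F * Fᵀ = 1 := mul_eq_one_comm.mp hF
  have heq : U * Matrix.diagonal σ * Vᵀ = F * Matrix.diagonal τ * Gᵀ :=
    hSVD1.symm.trans hSVD2
  -- h1 : D * (Vᵀ G) = (Uᵀ F) * E
  have h1 : Matrix.diagonal σ * (Vᵀ * G) = (Uᵀ * F) * Matrix.diagonal τ := by
    have e := congrArg (fun M => Uᵀ * M * G) heq
    simp only [Matrix.mul_assoc] at e ⊢
    rw [← Matrix.mul_assoc Uᵀ U, hU, one_mul, hG] at e
    simpa using e
  -- h1' : D * (Uᵀ F) = (Vᵀ G) * E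
  have h1' : Matrix.diagonal σ * (Uᵀ * F) = (Vᵀ * G) * Matrix.diagonal τ := by
    have et := congrArg Matrix.transpose heq
    simp only [Matrix.transpose_mul, Matrix.transpose_transpose,
      Matrix.diagonal_transpose] at et
    have e := congrArg (fun M => Vᵀ * M * F) et
    simp only [Matrix.mul_assoc] at e ⊢
    rw [← Matrix.mul_assoc Vᵀ V, hV, one_mul, hF] at e
    simpa using e
  -- key : D_r * (Uᵀ F) = (Vᵀ G) * D_r
  set Dr : Matrix (Fin d) (Fin d) ℝ :=
    Matrix.diagonal (fun i : Fin d => if (i : ℕ) < r then (1 : ℝ) else 0) with hDr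
  have key : Dr * (Uᵀ * F) = (Vᵀ * G) * Dr := by
    ext i j
    have e1 : σ i * (Vᵀ * G) i j = (Uᵀ * F) i j * τ j := by
      have := congrFun (congrFun h1 i) j
      simpa [Matrix.diagonal_mul, Matrix.mul_diagonal] using this
    have e2 : σ i * (Uᵀ * F) i j = (Vᵀ * G) i j * τ j := by
      have := congrFun (congrFun h1' i) j
      simpa [Matrix.diagonal_mul, Matrix.mul_diagonal] using this
    simp only [hDr, Matrix.diagonal_mul, Matrix.mul_diagonal]
    by_cases hi : (i : ℕ) < r <;> by_cases hj : (j : ℕ) < r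
    · -- i < r, j < r
      have hσi : σ i ≠ 0 := (hσrank i).mpr hi
      have hτj : τ j ≠ 0 := (hτrank j).mpr hj
      simp only [hi, hj, if_true, one_mul, mul_one]
      by_cases hsq : σ i = τ j
      · have h := e2
        rw [hsq, mul_comm ((Vᵀ * G) i j) (τ j)] at h
        exact mul_left_cancel₀ hτj h
      · have hh : (σ i * σ i - τ j * τ j) * (Vᵀ * G) i j = 0 := by
          linear_combination σ i * e1 + τ j * e2
        have hne : σ i * σ i - τ j * τ j ≠ 0 := by
          intro h
          have h' : σ i * σ i = τ j * τ j := by linarith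
          rcases mul_self_eq_mul_self_iff.mp h' with h'' | h''
          · exact hsq h''
          · have hσpos : 0 < σ i := lt_of_le_of_ne (hσ0 i) (Ne.symm hσi)
            have hτpos : 0 < τ j := lt_of_le_of_ne (hτ0 j) (Ne.symm hτj)
            linarith
        have hW : (Vᵀ * G) i j = 0 := (mul_eq_zero.mp hh).resolve_left hne
        have hX : (Uᵀ * F) i j = 0 := by
          have h := e1
          rw [hW, mul_zero] at h
          exact (mul_eq_zero.mp h.symm).resolve_right hτj
        rw [hW, hX]
    · -- i < r, j ≥ r : τ j = 0, show (Uᵀ F) i j = 0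
      have hσi : σ i ≠ 0 := (hσrank i).mpr hi
      have hτj : τ j = 0 := by
        by_contra h; exact hj ((hτrank j).mp h)
      simp only [hi, hj, if_true, if_false, one_mul, mul_zero]
      have h := e2
      rw [hτj, mul_zero] at h
      exact (mul_eq_zero.mp h).resolve_left hσi
    · -- i ≥ r, j < r : σ i = 0, show (Vᵀ G) i j = 0
      have hσi : σ i = 0 := by
        by_contra h; exact hi ((hσrank i).mp h)
      have hτj : τ j ≠ 0 := (hτrank j).mpr hj
      simp only [hi, hj, if_true, if_false, zero_mul, mul_one]
      have h := e2
      rw [hσi, zero_mul] at h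
      exact ((mul_eq_zero.mp h.symm).resolve_right hτj).symm
    · simp [hi, hj]
  -- finish
  calc V * Dr * Uᵀ = V * Dr * Uᵀ * (F * Fᵀ) := by rw [hFF, mul_one]
    _ = V * (Dr * (Uᵀ * F)) * Fᵀ := by simp only [Matrix.mul_assoc]
    _ = V * ((Vᵀ * G) * Dr) * Fᵀ := by rw [key]
    _ = (V * Vᵀ) * (G * (Dr * Fᵀ)) := by simp only [Matrix.mul_assoc]
    _ = G * Dr * Fᵀ := by rw [hVV, one_mul, ← Matrix.mul_assoc]
end
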